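/- arXiv:1507.00388 — 3 statements merged into one kernel-verified Lean document; each statement's English description precedes it below -/
import Mathlib

section
/- For σ ∈ S_n, the linear extensions of the poset Φ(σ) correspond bijectively to the permutations τ in the weak Bruhat interval [id, σ]: a permutation τ read in one-line notation gives the linear order τ(1) ≺ τ(2) ≺ … ≺ τ(n), and this linear order extends Φ(σ) if and only if Inv(τ⁻¹) ⊆ Inv(σ⁻¹) (equivalently, τ ≤ σ in the appropriate weak order). -/
def Inversions {n : ℕ} (σ : Equiv.Perm (Fin n)) : Set (Fin n × Fin n) :=
  {p | p.1 < p.2 ∧ σ p.2 < σ p.1}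

theorem forall_le_imp_le_iff_inversions_subset {α β : Type*} [PartialOrder α] [LinearOrder β]
    (f g : α → β) :
    (∀ i j, i ≤ j → f i ≤ f j → g i ≤ g j) ↔
      {p : α × α | p.1 < p.2 ∧ g p.2 < g p.1} ⊆ {p | p.1 < p.2 ∧ f p.2 < f p.1} := by
  constructor
  · rintro hmono ⟨i, j⟩ ⟨hij, hg⟩
    refine ⟨hij, lt_of_not_ge fun hf => ?_⟩
    exact (hmono i j hij.le hf).not_gt hg
  · intro hsub i j hij hf
    rcases hij.eq_or_lt with rfl | hlt
    · exact le_rfl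
    · refine le_of_not_gt fun hg => ?_
      exact (hsub (show (i, j) ∈ _ from ⟨hlt, hg⟩)).2.not_ge hf

/-- `τ⁻¹ i ≤ τ⁻¹ j` says that `i` comes no later than `j` in the one-line word of `τ`. -/
theorem linear_extension_iff_inv_subset {n : ℕ} (σ τ : Equiv.Perm (Fin n)) :
    (∀ i j : Fin n, i ≤ j → σ⁻¹ i ≤ σ⁻¹ j → τ⁻¹ i ≤ τ⁻¹ j) ↔
      Inversions τ⁻¹ ⊆ Inversions σ⁻¹ :=
  forall_le_imp_le_iff_inversions_subset (⇑σ⁻¹) (⇑τ⁻¹)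
end

section
/- A set of consecutive indices B = {i, i+1, …, i+k} is a block of a permutation π ∈ S_n (i.e., π(B) is a set of consecutive integers) if and only if B is a module of the poset Φ(π): for all u, v ∈ B and x ∉ B, u ≼ x iff v ≼ x, and x ≼ u iff x ≼ v. -/
/-- The partial order `Φ(π)` on `[n]`: `i ≼ j` iff `i ≤ j` and `π⁻¹ i ≤ π⁻¹ j`. -/
def PhiLE {n : ℕ} (π : Equiv.Perm (Fin n)) (i j : Fin n) : Prop :=
  i ≤ j ∧ π⁻¹ i ≤ π⁻¹ j

/-- `T` is a module of `Φ(π)`: every element outside `T` compares identically to all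
elements of `T`. -/
def IsModule {n : ℕ} (π : Equiv.Perm (Fin n)) (T : Set (Fin n)) : Prop :=
  ∀ u ∈ T, ∀ v ∈ T, ∀ x ∉ T,
    (PhiLE π u x ↔ PhiLE π v x) ∧ (PhiLE π x u ↔ PhiLE π x v)

/-- A set of consecutive integers. -/
def IsConsecutive {n : ℕ} (B : Set (Fin n)) : Prop :=
  ∀ a ∈ B, ∀ c ∈ B, ∀ b, a ≤ b → b ≤ c → b ∈ B

/-!
An element outside an interval of a linear order lies above all of it or below all of it.
Applied in both coordinates of `Φ(π)`, this makes `π(B)` a module as soon as `B` and `π(B)`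
are intervals. Conversely, if `x ∉ π(B)` lies between values `u ≤ x ≤ w` of `π(B)`, then
`π⁻¹ x` is above or below all of `B`, so `u ≼ x` or `x ≼ w`; the module property then gives
`w ≼ x` or `x ≼ u`, forcing `x = w` or `x = u`.
-/

theorem isConsecutive_iff_ordConnected {n : ℕ} {B : Set (Fin n)} :
    IsConsecutive B ↔ B.OrdConnected :=
  ⟨fun h => ⟨fun _ ha _ hc _ hb => h _ ha _ hc _ hb.1 hb.2⟩,
    fun h _ ha _ hc _ hab hbc => h.out ha hc ⟨hab, hbc⟩⟩

namespace Set.OrdConnected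

variable {α : Type*} [LinearOrder α] {s : Set α} {a b y : α}

theorem le_iff_le_of_notMem (hs : s.OrdConnected) (ha : a ∈ s) (hb : b ∈ s) (hy : y ∉ s) :
    a ≤ y ↔ b ≤ y := by
  suffices key : ∀ {a b}, a ∈ s → b ∈ s → a ≤ y → b ≤ y from ⟨key ha hb, key hb ha⟩
  intro a b ha hb hay
  by_contra! hyb
  exact hy (hs.out ha hb ⟨hay, hyb.le⟩)

theorem ge_iff_ge_of_notMem (hs : s.OrdConnected) (ha : a ∈ s) (hb : b ∈ s) (hy : y ∉ s) :
    y ≤ a ↔ y ≤ b :=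
  hs.dual.le_iff_le_of_notMem (a := OrderDual.toDual a) ha hb hy

end Set.OrdConnected

section

variable {n : ℕ} (π : Equiv.Perm (Fin n)) {B : Set (Fin n)}

theorem isModule_image_of_ordConnected (hB : B.OrdConnected) (hT : (π '' B).OrdConnected) :
    IsModule π (π '' B) := by
  intro u hu v hv x hx
  have hu' : π⁻¹ u ∈ B := Set.mem_image_equiv.mp hu
  have hv' : π⁻¹ v ∈ B := Set.mem_image_equiv.mp hv
  have hx' : π⁻¹ x ∉ B := fun h => hx (Set.mem_image_equiv.mpr h)
  simp only [PhiLE, hT.le_iff_le_of_notMem hu hv hx, hT.ge_iff_ge_of_notMem hu hv hx,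
    hB.le_iff_le_of_notMem hu' hv' hx', hB.ge_iff_ge_of_notMem hu' hv' hx', and_self]

theorem ordConnected_image_of_isModule (hB : B.OrdConnected) (hM : IsModule π (π '' B)) :
    (π '' B).OrdConnected := by
  refine ⟨fun u hu w hw x hx => ?_⟩
  by_contra hxT
  have hu' : π⁻¹ u ∈ B := Set.mem_image_equiv.mp hu
  have hw' : π⁻¹ w ∈ B := Set.mem_image_equiv.mp hw
  have hx' : π⁻¹ x ∉ B := fun h => hxT (Set.mem_image_equiv.mpr h)
  obtain ⟨hup, hdown⟩ := hM u hu w hw x hxT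
  rcases le_total (π⁻¹ u) (π⁻¹ x) with h | h
  · have hwx : PhiLE π w x := hup.mp ⟨hx.1, h⟩
    exact hxT (le_antisymm hx.2 hwx.1 ▸ hw)
  · have hxu : PhiLE π x u := hdown.mpr ⟨hx.2, (hB.ge_iff_ge_of_notMem hu' hw' hx').mp h⟩
    exact hxT (le_antisymm hxu.1 hx.1 ▸ hu)

end

/-- A set `B` of consecutive indices is a block of `π` (its image `π(B)` is a set of
consecutive integers) if and only if the corresponding subset `π(B)` of the ground
set of `Φ(π)` is a module of `Φ(π)`. -/
theorem block_iff_module {n : ℕ} (π : Equiv.Perm (Fin n)) (B : Set (Fin n))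
    (hB : IsConsecutive B) :
    IsConsecutive (π '' B) ↔ IsModule π (π '' B) := by
  rw [isConsecutive_iff_ordConnected] at hB ⊢
  exact ⟨isModule_image_of_ordConnected π hB, ordConnected_image_of_isModule π hB⟩
end

section
/- A permutation π ∈ S_n with n ≥ 2 is simple (its only blocks are the singletons and [n]) if and only if the poset Φ(π) is indecomposable (its only modules are singletons and the whole ground set). -/
/-- `B` is a block of `π`: a set of consecutive indices whose image is a set of
consecutive integers. -/
def IsBlock {n : ℕ} (π : Equiv.Perm (Fin n)) (B : Set (Fin n)) : Prop :=
  IsConsecutive B ∧ IsConsecutive (π '' B)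

/-- `π` is simple: its only nonempty blocks are the singletons and all of `[n]`. -/
def IsSimple {n : ℕ} (π : Equiv.Perm (Fin n)) : Prop :=
  ∀ B : Set (Fin n), IsBlock π B → B.Nonempty → (∃ a, B = {a}) ∨ B = Set.univ

/-- `Φ(π)` is indecomposable: its only modules are `∅`, the singletons and `[n]`. -/
def Indecomposable {n : ℕ} (π : Equiv.Perm (Fin n)) : Prop :=
  ∀ T : Set (Fin n), IsModule π T → T = ∅ ∨ (∃ a, T = {a}) ∨ T = Set.univ

lemma mod_pos_between {n : ℕ} (π : Equiv.Perm (Fin n)) {T : Set (Fin n)}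
    (hT : IsModule π T) {u v y : Fin n}
    (hu : u ∈ T) (hv : v ∈ T) (hy : y ∉ T)
    (h1 : π⁻¹ u < π⁻¹ y) (h2 : π⁻¹ y < π⁻¹ v) : v < y ∧ y < u := by
  obtain ⟨hA, hB⟩ := hT u hu v hv y hy
  constructor
  · by_contra h
    push_neg at h
    have h3 : PhiLE π y v := ⟨h, le_of_lt h2⟩
    exact absurd (hB.mpr h3).2 (not_le_of_gt h1)
  · by_contra h
    push_neg at h
    have h3 : PhiLE π u y := ⟨h, le_of_lt h1⟩
    exact absurd (hA.mp h3).2 (not_le_of_gt h2)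

lemma mod_val_between {n : ℕ} (π : Equiv.Perm (Fin n)) {T : Set (Fin n)}
    (hT : IsModule π T) {u v y : Fin n}
    (hu : u ∈ T) (hv : v ∈ T) (hy : y ∉ T)
    (h1 : u < y) (h2 : y < v) : π⁻¹ v < π⁻¹ y ∧ π⁻¹ y < π⁻¹ u := by
  obtain ⟨hA, hB⟩ := hT u hu v hv y hy
  constructor
  · by_contra h
    push_neg at h
    have h3 : PhiLE π y v := ⟨le_of_lt h2, h⟩
    exact absurd (hB.mpr h3).1 (not_le_of_gt h1)
  · by_contra h
    push_neg at h
    have h3 : PhiLE π u y := ⟨le_of_lt h1, h⟩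
    exact absurd (hA.mp h3).1 (not_le_of_gt h2)

lemma consec_le_iff {n : ℕ} {S : Set (Fin n)} (hS : IsConsecutive S) {u v x : Fin n}
    (hu : u ∈ S) (hv : v ∈ S) (hx : x ∉ S) : (u ≤ x ↔ v ≤ x) := by
  constructor
  · intro h; by_contra h'; push_neg at h'
    exact hx (hS u hu v hv x h h'.le)
  · intro h; by_contra h'; push_neg at h'
    exact hx (hS v hv u hu x h h'.le)

lemma consec_ge_iff {n : ℕ} {S : Set (Fin n)} (hS : IsConsecutive S) {u v x : Fin n}
    (hu : u ∈ S) (hv : v ∈ S) (hx : x ∉ S) : (x ≤ u ↔ x ≤ v) := by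
  constructor
  · intro h; by_contra h'; push_neg at h'
    exact hx (hS v hv u hu x h'.le h)
  · intro h; by_contra h'; push_neg at h'
    exact hx (hS u hu v hv x h'.le h)

lemma indec_to_simple {n : ℕ} (π : Equiv.Perm (Fin n)) (hI : Indecomposable π) :
    IsSimple π := by
  intro B hB hBne
  have hmod : IsModule π (π '' B) := by
    intro u hu v hv x hx
    have hu' : π⁻¹ u ∈ B := by
      obtain ⟨b, hb, rfl⟩ := hu; simpa using hb
    have hv' : π⁻¹ v ∈ B := by
      obtain ⟨b, hb, rfl⟩ := hv; simpa using hb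
    have hx' : π⁻¹ x ∉ B := by
      intro hc
      exact hx ⟨π⁻¹ x, hc, by simp⟩
    constructor
    · exact and_congr (consec_le_iff hB.2 hu hv hx) (consec_le_iff hB.1 hu' hv' hx')
    · exact and_congr (consec_ge_iff hB.2 hu hv hx) (consec_ge_iff hB.1 hu' hv' hx')
  rcases hI (π '' B) hmod with h | ⟨a, ha⟩ | h
  · exfalso
    obtain ⟨b, hb⟩ := hBne
    exact absurd (Set.mem_image_of_mem π hb) (by simp [h])
  · left
    refine ⟨π⁻¹ a, ?_⟩
    ext b
    simp only [Set.mem_singleton_iff]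
    constructor
    · intro hb
      have : π b ∈ π '' B := Set.mem_image_of_mem π hb
      rw [ha, Set.mem_singleton_iff] at this
      simp [← this]
    · rintro rfl
      have : a ∈ π '' B := by rw [ha]; rfl
      obtain ⟨b, hb, hb'⟩ := this
      have : b = π⁻¹ a := by simp [← hb']
      rwa [← this]
  · right
    ext b
    simp only [Set.mem_univ, iff_true]
    have : π b ∈ π '' B := by rw [h]; trivial
    obtain ⟨b', hb', hb''⟩ := this
    have : b' = b := π.injective hb''
    rwa [← this]


lemma simple_to_indec {m : ℕ} (π : Equiv.Perm (Fin (m+1))) (hs : IsSimple π) :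
    Indecomposable π := by
  classical
  intro T hmod
  by_cases hss : T.Subsingleton
  · rcases hss.eq_empty_or_singleton with h | h
    · exact Or.inl h
    · exact Or.inr (Or.inl h)
  right; right
  obtain ⟨u0, hu0, v0, hv0, huv0⟩ := Set.not_subsingleton_iff.mp hss
  by_contra hTu
  by_cases hends : (0 : Fin (m+1)) ∈ T ∧ Fin.last m ∈ T
  · -- threshold block case
    obtain ⟨h0T, hLT⟩ := hends
    have hTc : (Finset.univ.filter (fun z => z ∉ T)).Nonempty := by
      obtain ⟨z, hz⟩ : ∃ z, z ∉ T := by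
        by_contra h
        push_neg at h
        exact hTu (Set.eq_univ_of_forall h)
      exact ⟨z, by simp [hz]⟩
    set y := (Finset.univ.filter (fun z => z ∉ T)).max' hTc with hy
    have hyT : y ∉ T := by
      have := (Finset.univ.filter (fun z => z ∉ T)).max'_mem hTc
      simpa using this
    have hmax : ∀ z, z ∉ T → z ≤ y := by
      intro z hz
      exact Finset.le_max' _ z (by simp [hz])
    have key : ∀ w1 w : Fin (m+1), w1 ≤ y → y < w → π⁻¹ w < π⁻¹ w1 := by
      intro w1 w h1 h2
      have hwT : w ∈ T := by
        by_contra hw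
        exact absurd (hmax w hw) (not_le_of_gt h2)
      by_cases hw1 : w1 ∈ T
      · have hlt : w1 < y := lt_of_le_of_ne h1 (fun h => hyT (h ▸ hw1))
        obtain ⟨ha, hb⟩ := mod_val_between π hmod hw1 hwT hyT hlt h2
        exact lt_trans ha hb
      · have h0 : (0 : Fin (m+1)) < w1 :=
          Fin.pos_iff_ne_zero.mpr (fun h => hw1 (h ▸ h0T))
        have := mod_val_between π hmod h0T hwT hw1 h0 (lt_of_le_of_lt h1 h2)
        exact this.1
    set Bc : Set (Fin (m+1)) := {p | π p ≤ y} with hBc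
    have hblock : IsBlock π Bc := by
      constructor
      · intro a ha c hc b hab hbc
        by_contra hb
        simp only [hBc, Set.mem_setOf_eq, not_le] at hb ha hc
        have := key (π a) (π b) ha hb
        simp only [Equiv.Perm.coe_inv, Equiv.symm_apply_apply] at this
        exact absurd hab (not_le_of_gt this)
      · intro a ha c hc b hab hbc
        obtain ⟨pc, hpc, rfl⟩ := hc
        refine ⟨π⁻¹ b, ?_, by simp⟩
        simp only [hBc, Set.mem_setOf_eq, Equiv.Perm.coe_inv, Equiv.apply_symm_apply]
        exact le_trans hbc hpc
    have h0B : π⁻¹ (0 : Fin (m+1)) ∈ Bc := by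
      simp only [hBc, Set.mem_setOf_eq, Equiv.Perm.coe_inv, Equiv.apply_symm_apply]
      exact Fin.zero_le y
    have hyB : π⁻¹ y ∈ Bc := by
      simp only [hBc, Set.mem_setOf_eq, Equiv.Perm.coe_inv, Equiv.apply_symm_apply, le_refl]
    rcases hs Bc hblock ⟨_, h0B⟩ with ⟨a, ha⟩ | h
    · rw [ha] at h0B hyB
      have h1 : π⁻¹ (0 : Fin (m+1)) = π⁻¹ y := by
        rw [Set.mem_singleton_iff.mp h0B, Set.mem_singleton_iff.mp hyB]
      have : (0 : Fin (m+1)) = y := by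
        have := congrArg π h1
        simpa using this
      exact hyT (this ▸ h0T)
    · have : π⁻¹ (Fin.last m) ∈ Bc := by rw [h]; trivial
      simp only [hBc, Set.mem_setOf_eq, Equiv.Perm.coe_inv, Equiv.apply_symm_apply] at this
      have hylast : y = Fin.last m := le_antisymm (Fin.le_last y) this
      exact hyT (hylast ▸ hLT)
  · -- hull block case
    set A : Set (Fin (m+1)) := {b | ∃ a ∈ T, ∃ c ∈ T, a ≤ b ∧ b ≤ c} with hA
    have hTA : T ⊆ A := fun t ht => ⟨t, ht, t, ht, le_refl t, le_refl t⟩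
    have hAcons : IsConsecutive A := by
      rintro a ⟨a1, ha1, c1, hc1, h1, h2⟩ c ⟨a2, ha2, c2, hc2, h3, h4⟩ b hab hbc
      exact ⟨a1, ha1, c2, hc2, le_trans h1 hab, le_trans hbc h4⟩
    set B : Set (Fin (m+1)) := {p | π p ∈ A} with hB
    have lower : ∀ p, π p ∈ A → ∃ u ∈ T, π⁻¹ u ≤ p := by
      intro p hp
      obtain ⟨a, haT, c, hcT, h1, h2⟩ := hp
      by_cases hpT : π p ∈ T
      · exact ⟨π p, hpT, by simp⟩
      · have h2' : π p < c := lt_of_le_of_ne h2 (fun h => hpT (h ▸ hcT))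
        have h1' : a < π p := lt_of_le_of_ne h1 (fun h => hpT (h ▸ haT))
        have := mod_val_between π hmod haT hcT hpT h1' h2'
        exact ⟨c, hcT, by simpa using this.1.le⟩
    have upper : ∀ p, π p ∈ A → ∃ v ∈ T, p ≤ π⁻¹ v := by
      intro p hp
      obtain ⟨a, haT, c, hcT, h1, h2⟩ := hp
      by_cases hpT : π p ∈ T
      · exact ⟨π p, hpT, by simp⟩
      · have h2' : π p < c := lt_of_le_of_ne h2 (fun h => hpT (h ▸ hcT))
        have h1' : a < π p := lt_of_le_of_ne h1 (fun h => hpT (h ▸ haT))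
        have := mod_val_between π hmod haT hcT hpT h1' h2'
        exact ⟨a, haT, by simpa using this.2.le⟩
    have hBcons : IsConsecutive B := by
      intro p1 hp1 p2 hp2 p h1 h2
      rcases eq_or_lt_of_le h1 with rfl | h1
      · exact hp1
      rcases eq_or_lt_of_le h2 with rfl | h2
      · exact hp2
      by_cases hpT : π p ∈ T
      · exact hTA hpT
      obtain ⟨u, huT, hu⟩ := lower p1 hp1
      obtain ⟨v, hvT, hv⟩ := upper p2 hp2
      have := mod_pos_between π hmod huT hvT hpT
        (by simpa using lt_of_le_of_lt hu h1) (by simpa using lt_of_lt_of_le h2 hv)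
      exact ⟨v, hvT, u, huT, this.1.le, this.2.le⟩
    have himg : π '' B = A := by
      ext b
      constructor
      · rintro ⟨p, hp, rfl⟩; exact hp
      · intro hb
        exact ⟨π⁻¹ b, by simpa [hB] using hb, by simp⟩
    have hblock : IsBlock π B := ⟨hBcons, by rw [himg]; exact hAcons⟩
    have hzA : ∃ z, z ∉ A := by
      push_neg at hends
      by_cases h0 : (0 : Fin (m+1)) ∈ T
      · refine ⟨Fin.last m, ?_⟩
        rintro ⟨a, haT, c, hcT, h1, h2⟩
        have : c = Fin.last m := le_antisymm (Fin.le_last c) h2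
        exact hends h0 (this ▸ hcT)
      · refine ⟨0, ?_⟩
        rintro ⟨a, haT, c, hcT, h1, h2⟩
        have : a = 0 := le_antisymm h1 (Fin.zero_le a)
        exact h0 (this ▸ haT)
    have hu0B : π⁻¹ u0 ∈ B := by simpa [hB] using hTA hu0
    have hv0B : π⁻¹ v0 ∈ B := by simpa [hB] using hTA hv0
    rcases hs B hblock ⟨_, hu0B⟩ with ⟨a, ha⟩ | h
    · rw [ha] at hu0B hv0B
      have h1 : π⁻¹ u0 = π⁻¹ v0 := by
        rw [Set.mem_singleton_iff.mp hu0B, Set.mem_singleton_iff.mp hv0B]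
      have : u0 = v0 := by
        have := congrArg π h1
        simpa using this
      exact huv0 this
    · obtain ⟨z, hz⟩ := hzA
      have : π⁻¹ z ∈ B := by rw [h]; trivial
      simp only [hB, Set.mem_setOf_eq, Equiv.Perm.coe_inv, Equiv.apply_symm_apply] at this
      exact hz this

/-- For `n ≥ 2`, a permutation `π ∈ S_n` is simple iff the poset `Φ(π)` is
indecomposable. -/
theorem simple_iff_indecomposable {n : ℕ} (hn : 2 ≤ n) (π : Equiv.Perm (Fin n)) :
    IsSimple π ↔ Indecomposable π := by
  obtain ⟨m, rfl⟩ : ∃ m, n = m + 1 := ⟨n - 1, by omega⟩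
  exact ⟨simple_to_indec π, indec_to_simple π⟩
end
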